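/- Let P be a Poisson algebra over a field 𝔽 of positive characteristic p > 0. If P is Lie nilpotent, then the Poisson ideal {P,P}·P is nil of bounded index: there exists a positive integer r such that x^r = 0 for every x ∈ {P,P}·P. -/

import Mathlib

/-- A Poisson bracket on a commutative associative unital `F`-algebra `P`:
an `F`-bilinear, alternating bracket satisfying the Jacobi identity and the
Leibniz rule `{a·b, c} = a·{b,c} + b·{a,c}`. -/
structure PoissonBracket (F P : Type*) [Field F] [CommRing P] [Algebra F P] where
  bracket : P → P → P
  add_left : ∀ a b c : P, bracket (a + b) c = bracket a c + bracket b c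
  smul_left : ∀ (r : F) (a b : P), bracket (r • a) b = r • bracket a b
  add_right : ∀ a b c : P, bracket a (b + c) = bracket a b + bracket a c
  smul_right : ∀ (r : F) (a b : P), bracket a (r • b) = r • bracket a b
  alt : ∀ a : P, bracket a a = 0
  jacobi : ∀ a b c : P,
    bracket (bracket a b) c + bracket (bracket b c) a + bracket (bracket c a) b = 0
  leibniz : ∀ a b c : P, bracket (a * b) c = a * bracket b c + b * bracket a c

namespace PoissonBracket

variable {F P : Type*} [Field F] [CommRing P] [Algebra F P]

/-- `{A, B}`: the `F`-span of all brackets of elements of `A` with elements of `B`. -/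
def lieSpan (pb : PoissonBracket F P) (A B : Submodule F P) : Submodule F P :=
  Submodule.span F {z : P | ∃ a ∈ A, ∃ b ∈ B, z = pb.bracket a b}

/-- Upper derived series: `δ̃₀(P) = P`, `δ̃ₙ₊₁(P) = {δ̃ₙ(P), δ̃ₙ(P)}·P`. -/
def udelta (pb : PoissonBracket F P) : ℕ → Submodule F P
  | 0 => ⊤
  | n + 1 => pb.lieSpan (pb.udelta n) (pb.udelta n) * ⊤

/-- Derived series of a Lie ideal `I`: `δ₀(I) = I`, `δₙ₊₁(I) = {δₙ(I), δₙ(I)}`. -/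
def dseries (pb : PoissonBracket F P) (I : Submodule F P) : ℕ → Submodule F P
  | 0 => I
  | n + 1 => pb.lieSpan (pb.dseries I n) (pb.dseries I n)

/-- Lower central series of a Lie ideal `I`, indexed so that `lcs I 1 = γ₁(I) = I`
and `lcs I (n+1) = γₙ₊₁(I) = {γₙ(I), I}` for `n ≥ 1` (index `0` is a dummy equal to `I`). -/
def lcs (pb : PoissonBracket F P) (I : Submodule F P) : ℕ → Submodule F P
  | 0 => I
  | 1 => I
  | n + 2 => pb.lieSpan (pb.lcs I (n + 1)) I

/-- Upper Lie power series: `P⁽¹⁾ = P`, `P⁽ⁿ⁾ = {P⁽ⁿ⁻¹⁾, P}·P` for `n > 1`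
(index `0` is a dummy equal to `P`). -/
def ulps (pb : PoissonBracket F P) : ℕ → Submodule F P
  | 0 => ⊤
  | 1 => ⊤
  | n + 2 => pb.lieSpan (pb.ulps (n + 1)) ⊤ * ⊤

/-- A Poisson ideal: an ideal for the associative product which is also a Lie ideal. -/
def IsPoissonIdeal (pb : PoissonBracket F P) (I : Submodule F P) : Prop :=
  (∀ x ∈ I, ∀ p : P, p * x ∈ I) ∧ (∀ x ∈ I, ∀ p : P, pb.bracket x p ∈ I)

/-- The Poisson ideal generated by a set `S`: the smallest Poisson ideal containing `S`. -/
def poissonSpan (pb : PoissonBracket F P) (S : Set P) : Submodule F P :=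
  sInf {I : Submodule F P | pb.IsPoissonIdeal I ∧ S ⊆ I}

end PoissonBracket

open PoissonBracket

/-!
For `g ∈ γₘ₊₁(P)` and `b ∈ P` the Leibniz rule gives
`{g, b}² = {{g, b·g}, b} - g·{{g, b}, b} ∈ γₘ₊₃(P)·P`.
In characteristic `p` the Frobenius map `x ↦ xᵖ` is additive, so this squares-of-generators
estimate spreads to `xᵖ ∈ γₘ₊₃(P)·P` for every `x ∈ γₘ₊₂(P)·P`. Iterating from `{P, P}·P = γ₂(P)·P`,
`x^(pᶜ) ∈ γ_{c+2}(P)·P ⊆ γ_c(P)·P`, which vanishes once `γ_c(P) = 0`.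
-/

namespace Submodule

variable {R A : Type*} [CommSemiring R]

lemma mul_mem_mul_top [Semiring A] [Algebra R A] {M : Submodule R A} {y : A} (hy : y ∈ M * ⊤)
    (z : A) : y * z ∈ M * (⊤ : Submodule R A) := by
  induction hy using Submodule.mul_induction_on' with
  | mem_mul_mem a ha t _ => rw [mul_assoc]; exact mul_mem_mul ha mem_top
  | add y _ y' _ hy hy' => rw [add_mul]; exact add_mem hy hy'

variable [CommSemiring A] [Algebra R A] (p : ℕ) [Fact p.Prime] [CharP A p]

lemma pow_char_mem_of_mem_span {S : Set A} {J : Submodule R A} (hS : ∀ a ∈ S, a ^ p ∈ J)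
    {x : A} (hx : x ∈ span R S) : x ^ p ∈ J := by
  induction hx using Submodule.span_induction with
  | mem a ha => exact hS a ha
  | zero => rw [zero_pow (Fact.out : p.Prime).ne_zero]; exact J.zero_mem
  | add y z _ _ hy hz => rw [add_pow_char]; exact J.add_mem hy hz
  | smul c y _ hy => rw [smul_pow]; exact J.smul_mem _ hy

lemma pow_char_mem_of_mem_mul_top {M J : Submodule R A} (hJ : ∀ y ∈ J, ∀ z, y * z ∈ J)
    (hM : ∀ a ∈ M, a ^ p ∈ J) {x : A} (hx : x ∈ M * ⊤) : x ^ p ∈ J := by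
  induction hx using Submodule.mul_induction_on' with
  | mem_mul_mem a ha t _ => rw [mul_pow]; exact hJ _ (hM a ha) _
  | add y _ z _ hy hz => rw [add_pow_char]; exact J.add_mem hy hz

end Submodule

namespace PoissonBracket

variable {F P : Type*} [Field F] [CommRing P] [Algebra F P] (pb : PoissonBracket F P)

lemma bracket_swap (a b : P) : pb.bracket a b = -pb.bracket b a := by
  have h := pb.alt (a + b)
  rw [pb.add_left, pb.add_right, pb.add_right, pb.alt, pb.alt] at h
  linear_combination h

lemma bracket_mul_right (a b c : P) :
    pb.bracket a (b * c) = b * pb.bracket a c + c * pb.bracket a b := by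
  rw [pb.bracket_swap a (b * c), pb.leibniz, pb.bracket_swap c a, pb.bracket_swap b a]
  ring

lemma bracket_sq (g b : P) :
    pb.bracket g b ^ 2 =
      pb.bracket (pb.bracket g (b * g)) b - g * pb.bracket (pb.bracket g b) b := by
  have h : pb.bracket g (b * g) = g * pb.bracket g b := by
    rw [pb.bracket_mul_right, pb.alt]; ring
  rw [h, pb.leibniz]; ring

lemma bracket_mem_lieSpan {A B : Submodule F P} {a b : P} (ha : a ∈ A) (hb : b ∈ B) :
    pb.bracket a b ∈ pb.lieSpan A B :=
  Submodule.subset_span ⟨a, ha, b, hb, rfl⟩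

lemma lieSpan_mono {A A' B B' : Submodule F P} (hA : A ≤ A') (hB : B ≤ B') :
    pb.lieSpan A B ≤ pb.lieSpan A' B' :=
  Submodule.span_mono fun _ ⟨a, ha, b, hb, h⟩ => ⟨a, hA ha, b, hB hb, h⟩

lemma lcs_top_antitone : Antitone (pb.lcs ⊤) := by
  refine antitone_nat_of_succ_le fun n => ?_
  induction n with
  | zero => exact le_rfl
  | succ n ih =>
    cases n with
    | zero => exact le_top
    | succ n => exact pb.lieSpan_mono ih le_rfl

lemma bracket_sq_mem_lcs_mul_top {m : ℕ} {g : P} (hg : g ∈ pb.lcs ⊤ (m + 1)) (b : P) :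
    pb.bracket g b ^ 2 ∈ pb.lcs ⊤ (m + 3) * (⊤ : Submodule F P) := by
  have h₁ : pb.bracket (pb.bracket g (b * g)) b ∈ pb.lcs ⊤ (m + 3) :=
    pb.bracket_mem_lieSpan (pb.bracket_mem_lieSpan hg Submodule.mem_top) Submodule.mem_top
  have h₂ : pb.bracket (pb.bracket g b) b ∈ pb.lcs ⊤ (m + 3) :=
    pb.bracket_mem_lieSpan (pb.bracket_mem_lieSpan hg Submodule.mem_top) Submodule.mem_top
  rw [pb.bracket_sq, mul_comm g]
  refine Submodule.sub_mem _ ?_ (Submodule.mul_mem_mul h₂ Submodule.mem_top)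
  simpa using Submodule.mul_mem_mul h₁ (Submodule.mem_top (x := (1 : P)))

variable (p : ℕ) [Fact p.Prime] [CharP P p]

lemma pow_char_mem_lcs_mul_top {m : ℕ} {x : P}
    (hx : x ∈ pb.lcs ⊤ (m + 2) * (⊤ : Submodule F P)) :
    x ^ p ∈ pb.lcs ⊤ (m + 3) * (⊤ : Submodule F P) := by
  refine Submodule.pow_char_mem_of_mem_mul_top p
    (fun _ hy z => Submodule.mul_mem_mul_top hy z) (fun a ha => ?_) hx
  refine Submodule.pow_char_mem_of_mem_span p ?_ ha
  rintro _ ⟨g, hg, b, -, rfl⟩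
  rw [← Nat.add_sub_cancel' (Fact.out : p.Prime).two_le, pow_add]
  exact Submodule.mul_mem_mul_top (pb.bracket_sq_mem_lcs_mul_top hg b) _

lemma pow_char_pow_mem_lcs_mul_top {x : P} (hx : x ∈ pb.lieSpan ⊤ ⊤ * (⊤ : Submodule F P))
    (j : ℕ) : x ^ p ^ j ∈ pb.lcs ⊤ (j + 2) * (⊤ : Submodule F P) := by
  induction j with
  | zero => rw [pow_zero, pow_one]; exact hx
  | succ j ih => rw [pow_succ, pow_mul]; exact pb.pow_char_mem_lcs_mul_top p ih

end PoissonBracket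

/-- Over a field of positive characteristic `p > 0`, if `P` is Lie nilpotent then
the Poisson ideal `{P,P}·P` is nil of bounded index. -/
theorem lieNilpotent_lieSpan_mul_top_isNil_boundedIndex
    {F P : Type*} [Field F] [CommRing P] [Algebra F P]
    (p : ℕ) [CharP F p] (hp : 0 < p)
    (pb : PoissonBracket F P)
    (hnilp : ∃ c : ℕ, pb.lcs ⊤ c = ⊥) :
    ∃ r : ℕ, 0 < r ∧ ∀ x ∈ pb.lieSpan ⊤ ⊤ * (⊤ : Submodule F P), x ^ r = 0 := by
  obtain ⟨c, hc⟩ := hnilp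
  refine ⟨p ^ c, pow_pos hp c, fun x hx => ?_⟩
  rcases subsingleton_or_nontrivial P with _ | _
  · exact Subsingleton.elim _ _
  have : NeZero p := ⟨hp.ne'⟩
  have : Fact p.Prime := CharP.char_is_prime_of_pos F p
  have : CharP P p := charP_of_injective_algebraMap' F p
  have hx' := mul_le_mul_left (pb.lcs_top_antitone (Nat.le_add_right c 2)) _
    (pb.pow_char_pow_mem_lcs_mul_top p hx c)
  rwa [hc, Submodule.bot_mul, Submodule.mem_bot] at hx'
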